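/- arXiv:1010.3737 — 4 statements merged into one kernel-verified Lean document; each statement's English description precedes it below -/
import Mathlib

section
/- In a right seminormal band B (a band satisfying tuv = tvtuv), for any element ε and any two elements x, y lying in the same D-class (equivalently, generating the same two-sided ideal), the elements εx and εy are R-related. -/
theorem mul_mul_mul_eq_of_mul_mul_eq {B : Type*} [Semigroup B]
    (hid : ∀ t u v : B, t * u * v = t * v * t * u * v)
    {x y : B} (hy : y * x * y = y) (ε : B) :
    ε * x * (ε * y) = ε * y :=
  calc ε * x * (ε * y) = ε * x * ε * (y * x * y) := by rw [hy, mul_assoc (ε * x)]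
    _ = ε * x * ε * y * x * y := by simp only [mul_assoc]
    _ = ε * y * x * y := by rw [← hid ε y x]
    _ = ε * y := by rw [mul_assoc ε, mul_assoc ε, hy]

theorem stmt_2_general {B : Type*} [Semigroup B]
    (hid : ∀ t u v : B, t * u * v = t * v * t * u * v)
    (ε x y : B) (hx : x * y * x = x) (hy : y * x * y = y) :
    (ε * x) * (ε * y) = ε * y ∧ (ε * y) * (ε * x) = ε * x :=
  ⟨mul_mul_mul_eq_of_mul_mul_eq hid hy ε, mul_mul_mul_eq_of_mul_mul_eq hid hx ε⟩

/-- In a right seminormal band (a band satisfying `t*u*v = t*v*t*u*v`),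
for any `ε` and any two D-related elements `x`, `y` (i.e. `x*y*x = x` and
`y*x*y = y`), the elements `ε*x` and `ε*y` are R-related
(`p R q` iff `p*q = q` and `q*p = p`). -/
theorem stmt_2 {B : Type*} [Semigroup B]
    (hband : ∀ b : B, b * b = b)
    (hid : ∀ t u v : B, t * u * v = t * v * t * u * v)
    (ε x y : B) (hx : x * y * x = x) (hy : y * x * y = y) :
    (ε * x) * (ε * y) = ε * y ∧ (ε * y) * (ε * x) = ε * x :=
  stmt_2_general hid ε x y hx hy
end

section
/- The group presented by generators f_{ij} for i,j ∈ {1,2,3,4}, with relations f_{1j} = 1 and f_{i1} = 1 for all i, f_{22} = f_{44} = 1, f_{23} = f_{24}, f_{24} = f_{34}, f_{43}⁻¹ = f_{33}⁻¹ f_{34}, f_{32} = f_{42}, f_{42} = f_{43}, and f_{23} = f_{32}⁻¹ f_{33}, is isomorphic to ℤ ⊕ ℤ. -/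
/-!
Write `x = f 23` and `y = f 32`. The relations express every generator through `x` and `y`:
`f 24 = f 34 = x`, `f 42 = f 43 = y`, and the remaining relations say `f 33 = x y` and
`f 33 = y x`, and all other generators are trivial. So the group is generated by two commuting elements,
and conversely any commuting pair `a, b` in any group satisfies all relations under
`x ↦ a, y ↦ b`. Applied to the standard basis of `ℤ × ℤ` and to `x, y` themselves, this gives
mutually inverse homomorphisms.
-/

open FreeGroup Multiplicative

def Commute.zpowersHom₂ {G : Type*} [Group G] {a b : G} (h : Commute a b) :
    Multiplicative (ℤ × ℤ) →* G :=
  ((zpowersHom G a).noncommCoprod (zpowersHom G b) fun m n => h.zpow_zpow m.toAdd n.toAdd).comp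
    (MulEquiv.prodMultiplicative ℤ ℤ).toMonoidHom

theorem Commute.zpowersHom₂_apply {G : Type*} [Group G] {a b : G} (h : Commute a b)
    (g : Multiplicative (ℤ × ℤ)) : h.zpowersHom₂ g = a ^ g.toAdd.1 * b ^ g.toAdd.2 :=
  rfl

namespace GridPresentation

abbrev rels : Set (FreeGroup (Fin 4 × Fin 4)) :=
  ({r | ∃ j : Fin 4, r = of ((0 : Fin 4), j)} ∪
    {r | ∃ i : Fin 4, r = of (i, (0 : Fin 4))} ∪
    {of ((1 : Fin 4), (1 : Fin 4)),
     of ((3 : Fin 4), (3 : Fin 4)),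
     of ((1 : Fin 4), (2 : Fin 4)) * (of ((1 : Fin 4), (3 : Fin 4)))⁻¹,
     of ((1 : Fin 4), (3 : Fin 4)) * (of ((2 : Fin 4), (3 : Fin 4)))⁻¹,
     (of ((3 : Fin 4), (2 : Fin 4)))⁻¹ *
       ((of ((2 : Fin 4), (2 : Fin 4)))⁻¹ * of ((2 : Fin 4), (3 : Fin 4)))⁻¹,
     of ((2 : Fin 4), (1 : Fin 4)) * (of ((3 : Fin 4), (1 : Fin 4)))⁻¹,
     of ((3 : Fin 4), (1 : Fin 4)) * (of ((3 : Fin 4), (2 : Fin 4)))⁻¹,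
     of ((1 : Fin 4), (2 : Fin 4)) *
       ((of ((2 : Fin 4), (1 : Fin 4)))⁻¹ * of ((2 : Fin 4), (2 : Fin 4)))⁻¹})

abbrev Grid := PresentedGroup rels

section Assignment

variable {G : Type*} [Group G]

/-- The value of the generator `f (i+1) (j+1)` (row `i`, column `j`) under `x ↦ a`, `y ↦ b`. -/
def assignment (a b : G) : Fin 4 × Fin 4 → G := fun p =>
  ![![1, 1, 1, 1],
    ![1, 1, a, a],
    ![1, b, a * b, a],
    ![1, b, b, 1]] p.1 p.2

theorem map_assignment {H : Type*} [Group H] (f : G →* H) (a b : G) (p : Fin 4 × Fin 4) :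
    f (assignment a b p) = assignment (f a) (f b) p := by
  obtain ⟨i, j⟩ := p
  fin_cases i <;> fin_cases j <;> simp [assignment]

theorem lift_assignment_eq_one {a b : G} (h : Commute a b) :
    ∀ r ∈ rels, FreeGroup.lift (assignment a b) r = 1 := by
  rintro r ((⟨j, rfl⟩ | ⟨i, rfl⟩) | hr)
  · fin_cases j <;> simp [assignment]
  · fin_cases i <;> simp [assignment]
  · simp only [Set.mem_insert_iff, Set.mem_singleton_iff] at hr
    rcases hr with rfl | rfl | rfl | rfl | rfl | rfl | rfl | rfl <;>
      simp [assignment, mul_assoc, h.inv_left.eq]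

end Assignment

local notation "x" => (PresentedGroup.of ((1 : Fin 4), (2 : Fin 4)) : Grid)
local notation "y" => (PresentedGroup.of ((2 : Fin 4), (1 : Fin 4)) : Grid)

theorem of_zero_left (j : Fin 4) : (PresentedGroup.of ((0 : Fin 4), j) : Grid) = 1 :=
  PresentedGroup.one_of_mem (Or.inl (Or.inl ⟨j, rfl⟩))

theorem of_zero_right (i : Fin 4) : (PresentedGroup.of (i, (0 : Fin 4)) : Grid) = 1 :=
  PresentedGroup.one_of_mem (Or.inl (Or.inr ⟨i, rfl⟩))

theorem of_one_one : (PresentedGroup.of ((1 : Fin 4), (1 : Fin 4)) : Grid) = 1 :=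
  PresentedGroup.one_of_mem (by simp)

theorem of_three_three : (PresentedGroup.of ((3 : Fin 4), (3 : Fin 4)) : Grid) = 1 :=
  PresentedGroup.one_of_mem (by simp)

theorem of_one_three : (PresentedGroup.of ((1 : Fin 4), (3 : Fin 4)) : Grid) = x :=
  (PresentedGroup.mk_eq_mk_of_mul_inv_mem (by simp)).symm

theorem of_two_three : (PresentedGroup.of ((2 : Fin 4), (3 : Fin 4)) : Grid) = x :=
  (PresentedGroup.mk_eq_mk_of_mul_inv_mem (by simp)).symm.trans of_one_three

theorem of_three_one : (PresentedGroup.of ((3 : Fin 4), (1 : Fin 4)) : Grid) = y :=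
  (PresentedGroup.mk_eq_mk_of_mul_inv_mem (by simp)).symm

theorem of_three_two : (PresentedGroup.of ((3 : Fin 4), (2 : Fin 4)) : Grid) = y :=
  (PresentedGroup.mk_eq_mk_of_mul_inv_mem (by simp)).symm.trans of_three_one

theorem of_two_two_eq_x_mul_y : (PresentedGroup.of ((2 : Fin 4), (2 : Fin 4)) : Grid) = x * y := by
  have hy : y = ((PresentedGroup.of ((2 : Fin 4), (2 : Fin 4)))⁻¹ * x)⁻¹ := by
    rw [← of_three_two, ← of_two_three]
    exact PresentedGroup.mk_eq_mk_of_inv_mul_mem (by simp)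
  rw [hy]; group

theorem of_two_two_eq_y_mul_x : (PresentedGroup.of ((2 : Fin 4), (2 : Fin 4)) : Grid) = y * x := by
  have hx : x = y⁻¹ * PresentedGroup.of ((2 : Fin 4), (2 : Fin 4)) :=
    PresentedGroup.mk_eq_mk_of_mul_inv_mem (by simp)
  rw [hx]; group

theorem commute_x_y : Commute x y :=
  of_two_two_eq_x_mul_y.symm.trans of_two_two_eq_y_mul_x

theorem of_eq_assignment (p : Fin 4 × Fin 4) :
    (PresentedGroup.of p : Grid) = assignment x y p := by
  obtain ⟨i, j⟩ := p
  fin_cases i <;> fin_cases j <;>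
    simp [assignment, of_zero_left, of_zero_right, of_one_one, of_three_three, of_one_three,
      of_two_three, of_three_one, of_three_two, of_two_two_eq_x_mul_y]

def toProd : Grid →* Multiplicative (ℤ × ℤ) :=
  PresentedGroup.toGroup (lift_assignment_eq_one (Commute.all (ofAdd (1, 0)) (ofAdd (0, 1))))

def ofProd : Multiplicative (ℤ × ℤ) →* Grid :=
  commute_x_y.zpowersHom₂

theorem toProd_of (p : Fin 4 × Fin 4) :
    toProd (PresentedGroup.of p) = assignment (ofAdd (1, 0)) (ofAdd (0, 1)) p :=
  PresentedGroup.toGroup.of _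

theorem ofProd_comp_toProd : ofProd.comp toProd = MonoidHom.id Grid :=
  PresentedGroup.ext fun p => by
    rw [MonoidHom.comp_apply, toProd_of, map_assignment, MonoidHom.id_apply, of_eq_assignment,
      ofProd, Commute.zpowersHom₂_apply, Commute.zpowersHom₂_apply]
    simp

theorem toProd_comp_ofProd : toProd.comp ofProd = MonoidHom.id (Multiplicative (ℤ × ℤ)) :=
  MonoidHom.ext fun g => by
    simp [ofProd, Commute.zpowersHom₂_apply, toProd_of, assignment, ← ofAdd_zsmul, ← ofAdd_add]

end GridPresentation

open FreeGroup in
/-- The group presented by generators `f i j` (`i j ∈ {1,2,3,4}`, here indexed by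
`Fin 4` with `0 ↔ 1`, …, `3 ↔ 4`) and relations `f 1 j = 1`, `f i 1 = 1`,
`f 22 = f 44 = 1`, `f 23 = f 24`, `f 24 = f 34`, `(f 43)⁻¹ = (f 33)⁻¹ * f 34`,
`f 32 = f 42`, `f 42 = f 43`, `f 23 = (f 32)⁻¹ * f 33`
is isomorphic to `ℤ ⊕ ℤ`. -/
theorem stmt_6 :
    Nonempty
      (PresentedGroup
          (({r | ∃ j : Fin 4, r = of ((0 : Fin 4), j)} ∪
            {r | ∃ i : Fin 4, r = of (i, (0 : Fin 4))} ∪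
            {of ((1 : Fin 4), (1 : Fin 4)),
             of ((3 : Fin 4), (3 : Fin 4)),
             of ((1 : Fin 4), (2 : Fin 4)) * (of ((1 : Fin 4), (3 : Fin 4)))⁻¹,
             of ((1 : Fin 4), (3 : Fin 4)) * (of ((2 : Fin 4), (3 : Fin 4)))⁻¹,
             (of ((3 : Fin 4), (2 : Fin 4)))⁻¹ *
               ((of ((2 : Fin 4), (2 : Fin 4)))⁻¹ * of ((2 : Fin 4), (3 : Fin 4)))⁻¹,
             of ((2 : Fin 4), (1 : Fin 4)) * (of ((3 : Fin 4), (1 : Fin 4)))⁻¹,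
             of ((3 : Fin 4), (1 : Fin 4)) * (of ((3 : Fin 4), (2 : Fin 4)))⁻¹,
             of ((1 : Fin 4), (2 : Fin 4)) *
               ((of ((2 : Fin 4), (1 : Fin 4)))⁻¹ * of ((2 : Fin 4), (2 : Fin 4)))⁻¹}) :
            Set (FreeGroup (Fin 4 × Fin 4))) ≃*
        Multiplicative (ℤ × ℤ)) :=
  ⟨GridPresentation.toProd.toMulEquiv GridPresentation.ofProd
    GridPresentation.ofProd_comp_toProd GridPresentation.toProd_comp_ofProd⟩
end

section
/- In a left seminormal band B (satisfying the identity tuv = tuvtv), for any element ε and any two D-related elements x, y, the elements xε and yε are L-related. -/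
private lemma key_lemma {B : Type*} [Semigroup B]
    (hband : ∀ b : B, b * b = b)
    (hid : ∀ t u v : B, v * u * t = v * u * t * v * t)
    (ε x y : B) (hx : x = x * y * x) : (x * ε) * (y * ε) = x * ε := by
  -- step 1: x*ε = x*ε * (x * (y*ε))
  have h2 : x * ε = x * ε * (x * (y * ε)) := by
    have h := hid ε x (x * y)
    -- h : x*y*x*ε = x*y*x*ε*(x*y)*ε
    rw [← hx] at h
    calc x * ε = x * ε * (x * y) * ε := h
    _ = x * ε * (x * (y * ε)) := by simp only [mul_assoc]
  have h3 := hid (y * ε) x (x * ε)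
  -- h3 : x*ε*x*(y*ε) = x*ε*x*(y*ε)*(x*ε)*(y*ε)
  have h2' : x * ε = x * ε * x * (y * ε) := by
    calc x * ε = x * ε * (x * (y * ε)) := h2
    _ = x * ε * x * (y * ε) := by simp only [mul_assoc]
  calc (x * ε) * (y * ε) = (x * ε) * (x * ε) * (y * ε) := by rw [hband (x * ε)]
  _ = (x * ε * x * (y * ε)) * (x * ε) * (y * ε) := by rw [← h2']
  _ = x * ε * x * (y * ε) := (h3).symm
  _ = x * ε := h2'.symm

/-- In a left seminormal band (a band satisfying the identity dual to
`t*u*v = t*v*t*u*v`, namely `v*u*t = v*u*t*v*t`), for any `ε` and any two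
D-related elements `x`, `y` (i.e. `x = x*y*x` and `y = y*x*y`), the elements
`x*ε` and `y*ε` are L-related (`p L q` iff `p*q = p` and `q*p = q`). -/
theorem stmt_8 {B : Type*} [Semigroup B]
    (hband : ∀ b : B, b * b = b)
    (hid : ∀ t u v : B, v * u * t = v * u * t * v * t)
    (ε x y : B) (hx : x = x * y * x) (hy : y = y * x * y) :
    (x * ε) * (y * ε) = x * ε ∧ (y * ε) * (x * ε) = y * ε :=
  ⟨key_lemma hband hid ε x y hx, key_lemma hband hid ε y x hy⟩
end

section
/- In an arbitrary semigroup S, if an idempotent ε singularises a square of idempotents (e,f,g,h) via the conditions εe = e, εg = g, and e = fε (case (a)), then it follows that εf = f, εh = h, eε = e, and gε = g = hε, where (e,f,g,h) satisfy e R f, g R h, e L g, f L h. -/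
section Semigroup

variable {S : Type*} [Semigroup S]

theorem mul_eq_right_of_mul_eq_right {ε a b : S} (hεa : ε * a = a) (hab : a * b = b) :
    ε * b = b := by
  rw [← hab, ← mul_assoc, hεa]

theorem mul_eq_left_of_mul_eq_left {ε a b : S} (haε : a * ε = a) (hba : b * a = b) :
    b * ε = b := by
  rw [← hba, mul_assoc, haε]

end Semigroup

theorem stmt_10_general {S : Type*} [Semigroup S] (e f g h ε : S)
    (hε : ε * ε = ε)
    (hef₁ : e * f = f)
    (hgh₁ : g * h = h) (hgh₂ : h * g = g)
    (heg₁ : e * g = e) (heg₂ : g * e = g)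
    (hfh₂ : h * f = h)
    (h1 : ε * e = e) (h2 : ε * g = g) (h3 : e = f * ε) :
    ε * f = f ∧ ε * h = h ∧ e * ε = e ∧ g * ε = g ∧ h * ε = g := by
  have heε : e * ε = e := by rw [h3, mul_assoc, hε]
  have hhε : h * ε = h * e := by rw [h3, ← mul_assoc, hfh₂]
  have hhe : h * e = g :=
    calc h * e = h * e * g := by rw [mul_assoc, heg₁]
      _ = h * ε * g := by rw [hhε]
      _ = g := by rw [mul_assoc, h2, hgh₂]
  exact ⟨mul_eq_right_of_mul_eq_right h1 hef₁, mul_eq_right_of_mul_eq_right h2 hgh₁, heε,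
    mul_eq_left_of_mul_eq_left heε heg₂, hhε.trans hhe⟩

/-- Case (a) of singularisation: in a semigroup, if idempotents `e,f,g,h` form
a square (`e R f`, `g R h`, `e L g`, `f L h`, where for idempotents `p R q`
means `p*q = q`, `q*p = p` and `p L q` means `p*q = p`, `q*p = q`) and an
idempotent `ε` satisfies `ε*e = e`, `ε*g = g`, `e = f*ε`, then
`ε*f = f`, `ε*h = h`, `e*ε = e`, `g*ε = g` and `h*ε = g`. -/
theorem stmt_10 {S : Type*} [Semigroup S] (e f g h ε : S)
    (he : e * e = e) (hf : f * f = f) (hg : g * g = g) (hh : h * h = h)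
    (hε : ε * ε = ε)
    (hef₁ : e * f = f) (hef₂ : f * e = e)
    (hgh₁ : g * h = h) (hgh₂ : h * g = g)
    (heg₁ : e * g = e) (heg₂ : g * e = g)
    (hfh₁ : f * h = f) (hfh₂ : h * f = h)
    (h1 : ε * e = e) (h2 : ε * g = g) (h3 : e = f * ε) :
    ε * f = f ∧ ε * h = h ∧ e * ε = e ∧ g * ε = g ∧ h * ε = g :=
  stmt_10_general e f g h ε hε hef₁ hgh₁ hgh₂ heg₁ heg₂ hfh₂ h1 h2 h3
end
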